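/- arXiv:1301.0995 — 2 statements merged into one kernel-verified Lean document; each statement's English description precedes it below -/
import Mathlib

section
/- Let φ = c_1 ∧ … ∧ c_m be a uniform CNF formula over variables x_1,…,x_n with every clause nonempty. Construct the cognitive radio network I with two channels {0,1}: for each variable x_i an SU X_i with SpecMap = {0,1} and budget 1; for each clause c_j an SU C_j with SpecMap = {1} if c_j is positive and {0} if negative, and budget 1; an SU Y with SpecMap = {0,1} and budget 2; potential edges {X_i, C_j} whenever x_i occurs in c_j, and {Y, X_i} for all i. Then φ is satisfiable if and only if I is connectable. -/
/-- A cognitive radio network: secondary users `U`, channels `C`,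
spectrum maps, a potential graph, and antenna budgets. -/
structure CRN (U C : Type) where
  SpecMap : U → Finset C
  PG : SimpleGraph U
  budget : U → ℕ

/-- A valid spectrum assignment: each SU opens a subset of its spectrum map
of size at most its antenna budget. -/
def CRN.ValidSA {U C : Type} [DecidableEq C] (I : CRN U C) (SA : U → Finset C) : Prop :=
  ∀ u, SA u ⊆ I.SpecMap u ∧ (SA u).card ≤ I.budget u

/-- The realization graph under a spectrum assignment: potential edges whose
endpoints share an opened channel. -/
def CRN.RG {U C : Type} [DecidableEq C] (I : CRN U C) (SA : U → Finset C) : SimpleGraph U where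
  Adj u v := I.PG.Adj u v ∧ (SA u ∩ SA v).Nonempty
  symm := ⟨fun u v h => ⟨I.PG.adj_symm h.1, by rw [Finset.inter_comm]; exact h.2⟩⟩
  loopless := ⟨fun u h => I.PG.loopless.irrefl u h.1⟩

/-- A network is connectable if some valid spectrum assignment makes the
realization graph connected. -/
def CRN.Connectable {U C : Type} [DecidableEq C] (I : CRN U C) : Prop :=
  ∃ SA, I.ValidSA SA ∧ (I.RG SA).Connected

/-- The SU set of the reduction: variable SUs X_i, clause SUs C_j, and the SU Y. -/
abbrev V5 (n m : ℕ) := Fin n ⊕ Fin m ⊕ Unit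

/-- Spectrum maps: X_i gets {0,1}, C_j gets {1} if positive and {0} if negative,
Y gets {0,1}. A clause c_j is given by its variable set P j and polarity pos j. -/
def specMap5 (n m : ℕ) (pos : Fin m → Bool) : V5 n m → Finset (Fin 2)
  | Sum.inl _ => Finset.univ
  | Sum.inr (Sum.inl j) => {if pos j then (1 : Fin 2) else 0}
  | Sum.inr (Sum.inr _) => Finset.univ

/-- Budgets: 1 for the X_i and C_j, 2 for Y. -/
def budget5 (n m : ℕ) : V5 n m → ℕ
  | Sum.inl _ => 1
  | Sum.inr (Sum.inl _) => 1
  | Sum.inr (Sum.inr _) => 2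

/-- Potential edges (to be symmetrized): X_i -- C_j whenever x_i occurs in c_j,
and Y -- X_i for all i. -/
def rel5 (n m : ℕ) (P : Fin m → Finset (Fin n)) : V5 n m → V5 n m → Prop
  | Sum.inl i, Sum.inr (Sum.inl j) => i ∈ P j
  | Sum.inr (Sum.inr _), Sum.inl _ => True
  | _, _ => False

/-- The cognitive radio network of the two-channel reduction. -/
def net5 (n m : ℕ) (P : Fin m → Finset (Fin n)) (pos : Fin m → Bool) :
    CRN (V5 n m) (Fin 2) where
  SpecMap := specMap5 n m pos
  PG := SimpleGraph.fromRel (rel5 n m P)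
  budget := budget5 n m

/-!
A satisfying assignment `A` yields the assignment opening channel `A i` (read as `0` or `1`)
at `X_i`, the polarity channel at `C_j` and both channels at `Y`: every `X_i` hangs on `Y`, and
every `C_j` on a variable of `c_j` that satisfies it. Conversely, in a connected realization
graph each `C_j` has a neighbour, necessarily some `X_i` with `x_i ∈ c_j` sharing the polarity
channel of `c_j`; since `X_i` opens a single channel, setting `x_i` true iff `X_i` opens
channel `1` satisfies `c_j`.
-/

open Finset

def channelOf (b : Bool) : Fin 2 := if b then 1 else 0

lemma decide_one_mem_eq_of_card_le_one {s : Finset (Fin 2)} {b : Bool} (hs : #s ≤ 1)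
    (hb : channelOf b ∈ s) : decide ((1 : Fin 2) ∈ s) = b := by
  cases b
  · have h1 : (1 : Fin 2) ∉ s := fun h1 => absurd (card_le_one.1 hs _ hb _ h1) (by decide)
    simpa using h1
  · simpa [channelOf] using hb

section Net5

variable {n m : ℕ} {P : Fin m → Finset (Fin n)} {pos : Fin m → Bool}

lemma net5_adj_hub_var (i : Fin n) :
    (net5 n m P pos).PG.Adj (.inr (.inr ())) (.inl i) := by
  simp [net5, rel5]

lemma net5_adj_var_clause {i : Fin n} {j : Fin m} (hi : i ∈ P j) :
    (net5 n m P pos).PG.Adj (.inl i) (.inr (.inl j)) := by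
  simp [net5, rel5, hi]

lemma net5_adj_clause_iff {j : Fin m} {v : V5 n m} :
    (net5 n m P pos).PG.Adj (.inr (.inl j)) v ↔ ∃ i ∈ P j, v = .inl i := by
  rcases v with i | j' | u <;> simp [net5, rel5]

def assignmentSA (A : Fin n → Bool) (pos : Fin m → Bool) : V5 n m → Finset (Fin 2)
  | .inl i => {channelOf (A i)}
  | .inr (.inl j) => {channelOf (pos j)}
  | .inr (.inr _) => univ

lemma net5_validSA_assignmentSA (A : Fin n → Bool) :
    (net5 n m P pos).ValidSA (assignmentSA A pos) := by
  rintro (i | j | u) <;> simp [net5, assignmentSA, specMap5, budget5, channelOf]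

lemma net5_connected_RG_assignmentSA {A : Fin n → Bool} (hA : ∀ j, ∃ i ∈ P j, A i = pos j) :
    ((net5 n m P pos).RG (assignmentSA A pos)).Connected := by
  have hub : ∀ i, ((net5 n m P pos).RG (assignmentSA A pos)).Adj (.inr (.inr ())) (.inl i) :=
    fun i => ⟨net5_adj_hub_var i, by simp [assignmentSA]⟩
  refine (SimpleGraph.connected_iff_exists_forall_reachable _).2 ⟨.inr (.inr ()), ?_⟩
  rintro (i | j | u)
  · exact (hub i).reachable
  · obtain ⟨i, hi, hAi⟩ := hA j
    have hclause : ((net5 n m P pos).RG (assignmentSA A pos)).Adj (.inl i) (.inr (.inl j)) :=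
      ⟨net5_adj_var_clause hi, by simp [assignmentSA, hAi]⟩
    exact (hub i).reachable.trans hclause.reachable
  · rfl

lemma net5_exists_var_of_connected {SA : V5 n m → Finset (Fin 2)}
    (hSA : (net5 n m P pos).ValidSA SA) (hconn : ((net5 n m P pos).RG SA).Connected)
    (j : Fin m) : ∃ i ∈ P j, decide ((1 : Fin 2) ∈ SA (.inl i)) = pos j := by
  have : Nontrivial (V5 n m) := ⟨⟨.inr (.inl j), .inr (.inr ()), by simp⟩⟩
  obtain ⟨v, hadj, c, hc⟩ := hconn.preconnected.exists_adj_of_nontrivial (.inr (.inl j))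
  obtain ⟨i, hi, rfl⟩ := net5_adj_clause_iff.1 hadj
  rw [mem_inter] at hc
  have hpos : c = channelOf (pos j) := mem_singleton.1 ((hSA (.inr (.inl j))).1 hc.1)
  exact ⟨i, hi, decide_one_mem_eq_of_card_le_one (hSA (.inl i)).2 (hpos ▸ hc.2)⟩

end Net5

theorem stmt_5_general (n m : ℕ)
    (P : Fin m → Finset (Fin n)) (pos : Fin m → Bool) :
    (∃ A : Fin n → Bool, ∀ j, ∃ i ∈ P j, A i = pos j) ↔ (net5 n m P pos).Connectable := by
  constructor
  · rintro ⟨A, hA⟩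
    exact ⟨assignmentSA A pos, net5_validSA_assignmentSA A, net5_connected_RG_assignmentSA hA⟩
  · rintro ⟨SA, hSA, hconn⟩
    exact ⟨fun i => decide ((1 : Fin 2) ∈ SA (.inl i)), net5_exists_var_of_connected hSA hconn⟩

/-- The uniform CNF formula with nonempty clauses c_j = (P j, pos j) is
satisfiable iff the two-channel network of the reduction is connectable. -/
theorem stmt_5 (n m : ℕ)
    (P : Fin m → Finset (Fin n)) (pos : Fin m → Bool)
    (hne : ∀ j, (P j).Nonempty) :
    (∃ A : Fin n → Bool, ∀ j, ∃ i ∈ P j, A i = pos j) ↔ (net5 n m P pos).Connectable :=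
  stmt_5_general n m P pos
end

section
/- A cognitive radio network whose potential graph is a tree rooted at r is connectable if and only if there exists S ⊆ SpecMap(r) with |S| ≤ β(r) such that f(r,S) holds, where f is defined recursively by: for a leaf v, f(v,S) = true for all valid S; for internal v, f(v,S) = true iff every child v' of v admits some valid S' ⊆ SpecMap(v') with |S'| ≤ β(v'), S ∩ S' ≠ ∅, and f(v',S'). -/
/-- A cognitive radio network whose potential graph is a rooted tree: each node
carries its spectrum map and antenna budget, together with its list of subtrees. -/
inductive RTree (C : Type) : Type where
  | node (spec : Finset C) (budget : ℕ) (children : List (RTree C))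

namespace RTree

def spec {C : Type} : RTree C → Finset C
  | node s _ _ => s

def budget {C : Type} : RTree C → ℕ
  | node _ b _ => b

/-- Realizes t S holds iff there is a valid spectrum assignment of the subnetwork
rooted at t in which the root opens exactly S and every tree edge of the subtree
is realized (i.e. the subnetwork is connected under the assignment). -/
def Realizes {C : Type} [DecidableEq C] : RTree C → Finset C → Prop
  | node spec b ch, S =>
      S ⊆ spec ∧ S.card ≤ b ∧
        ∀ t ∈ ch, ∃ S', (S ∩ S').Nonempty ∧ Realizes t S'
termination_by t _ => sizeOf t
decreasing_by
  have := List.sizeOf_lt_of_mem (by assumption : t ∈ ch)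
  simp only [RTree.node.sizeOf_spec]
  omega

end RTree

namespace RTree

/-- The dynamic-programming predicate: f(v,S) is true for leaves, and for an
internal node v it is true iff every child v' admits a valid S' intersecting S
with f(v',S') true. -/
def f {C : Type} [DecidableEq C] : RTree C → Finset C → Prop
  | node _ _ ch, S =>
      ∀ t ∈ ch, ∃ S', S' ⊆ t.spec ∧ S'.card ≤ t.budget ∧
        (S ∩ S').Nonempty ∧ f t S'
termination_by t _ => sizeOf t
decreasing_by
  have := List.sizeOf_lt_of_mem (by assumption : t ∈ ch)
  simp only [RTree.node.sizeOf_spec]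
  omega

end RTree

namespace RTree

theorem key_aux {C : Type} [DecidableEq C] :
    ∀ n (t : RTree C), sizeOf t ≤ n → ∀ S,
      (t.Realizes S ↔ (S ⊆ t.spec ∧ S.card ≤ t.budget ∧ RTree.f t S)) := by
  intro n
  induction n with
  | zero => intro t ht; cases t; simp at ht
  | succ n ih =>
    rintro ⟨sp, b, ch⟩ ht S
    rw [Realizes, f]
    simp only [spec, budget]
    constructor
    · rintro ⟨h1, h2, h3⟩
      refine ⟨h1, h2, fun t htm => ?_⟩
      obtain ⟨S', hne, hr⟩ := h3 t htm
      have hsz : sizeOf t ≤ n := by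
        have := List.sizeOf_lt_of_mem htm
        simp only [RTree.node.sizeOf_spec] at ht
        omega
      obtain ⟨a, b', c⟩ := (ih t hsz S').mp hr
      exact ⟨S', a, b', hne, c⟩
    · rintro ⟨h1, h2, h3⟩
      refine ⟨h1, h2, fun t htm => ?_⟩
      obtain ⟨S', a, b', hne, c⟩ := h3 t htm
      have hsz : sizeOf t ≤ n := by
        have := List.sizeOf_lt_of_mem htm
        simp only [RTree.node.sizeOf_spec] at ht
        omega
      exact ⟨S', hne, (ih t hsz S').mpr ⟨a, b', c⟩⟩

theorem key {C : Type} [DecidableEq C] (t : RTree C) (S : Finset C) :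
    t.Realizes S ↔ (S ⊆ t.spec ∧ S.card ≤ t.budget ∧ RTree.f t S) :=
  key_aux (sizeOf t) t le_rfl S

end RTree

/-- A tree network rooted at r is connectable iff there is a valid set S at the
root with f(r,S) true. -/
theorem stmt_12 {C : Type} [DecidableEq C] (r : RTree C) :
    (∃ S, r.Realizes S) ↔
      ∃ S, S ⊆ r.spec ∧ S.card ≤ r.budget ∧ RTree.f r S := by
  exact exists_congr fun S => RTree.key r S
end
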